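/- arXiv:2011.08569 — 2 statements merged into one kernel-verified Lean document; each statement's English description precedes it below -/
import Mathlib

section
/- Under the following hypotheses: ρ > 0, α > 0; f : ℝⁿ → ℝ differentiable, l-smooth, and satisfying quadratic gradient growth at x* with parameter μ > 0 (⟨∇f(x) − ∇f(x*), x − x*⟩ ≥ μ‖x − x*‖² for all x); each g_i convex and differentiable with ‖∇g_i(x) − ∇g_i(y)‖ ≤ L_{gi}‖x−y‖ and ‖∇g_i(x)‖ ≤ B_{gi}; (x*, λ*) a KKT point (∇f(x*) + Σ_i λ_i*∇g_i(x*) = 0, λ* ≥ 0, g(x*) ≤ 0, λ_i* g_i(x*) = 0); and λ_k ≥ 0 componentwise — the primal update x_{k+1} = x_k − α∇f(x_k) − α Σ_{i=1}^m [ρ g_i(x_k)+λ_{i,k}]_+ ∇g_i(x_k) satisfies ‖x_{k+1} − x*‖² ≤ (1 − 2μα + a₁α²)‖x_k − x*‖² + a₂α²‖λ_k − λ*‖² + 2α(U_ρ(x*,λ_k) − U_ρ(x_k,λ_k)) + 2α(U_ρ(x_k,λ*) − U_ρ(x*,λ*)), where a₁ = 2l² + 4θ₁², a₂ = 4B_g²,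 B_g = sqrt(Σ_i B_{gi}²), L_g = sqrt(Σ_i L_{gi}²), and θ₁ = ρ B_g² + L_g‖λ*‖. -/
open scoped RealInnerProductSpace
open Finset

/-!
Write the update as `x_{k+1} = x_k - α v` with `v = ∇f(x_k) + ∇ₓU_ρ(x_k, λ_k)` and expand
`‖x_{k+1} - x*‖²`. The KKT conditions give `∇f(x*) + ∇ₓU_ρ(x*, λ*) = 0`, so `v` is a difference
of gradients at `(x_k, λ_k)` and `(x*, λ*)`. Its inner product with `x_k - x*` is bounded below
by quadratic gradient growth of `f` and by the first-order convexity inequality for `U_ρ(·, λ)`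
(each `g_i` is convex and `t ↦ [t]_+²` is convex and nondecreasing); its norm is bounded above
by the Lipschitz and boundedness constants of `∇f`, `∇g_i`, combined by Cauchy–Schwarz.
-/

theorem two_mul_max_zero_mul_sub_le (s t : ℝ) :
    2 * max s 0 * (t - s) ≤ max t 0 ^ 2 - max s 0 ^ 2 := by
  rcases le_or_gt s 0 with hs | hs
  · rw [max_eq_right hs]
    nlinarith [sq_nonneg (max t 0)]
  · rw [max_eq_left hs.le]
    rcases le_or_gt t 0 with ht | ht
    · rw [max_eq_right ht]; nlinarith
    · rw [max_eq_left ht.le]; nlinarith [sq_nonneg (t - s)]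

theorem max_mul_add_zero_eq_of_complementary {ρ c lam : ℝ} (hρ : 0 ≤ ρ) (hlam : 0 ≤ lam)
    (hc : c ≤ 0) (hcomp : lam * c = 0) : max (ρ * c + lam) 0 = lam := by
  rcases hlam.eq_or_lt with rfl | hpos
  · simpa using mul_nonpos_of_nonneg_of_nonpos hρ hc
  · rw [(mul_eq_zero.mp hcomp).resolve_left hpos.ne', mul_zero, zero_add, max_eq_left hlam]

theorem sum_mul_abs_le_sqrt_mul_norm {ι : Type*} [Fintype ι] (a : ι → ℝ)
    (v : EuclideanSpace ℝ ι) : ∑ i, a i * |v i| ≤ √(∑ i, a i ^ 2) * ‖v‖ := by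
  simpa [EuclideanSpace.norm_eq, sq_abs] using Real.sum_mul_le_sqrt_mul_sqrt univ a (|v ·|)

section InnerProductSpace

variable {E : Type*} [NormedAddCommGroup E] [InnerProductSpace ℝ E]

theorem norm_sub_smul_sub_sq_le {x z v : E} {α c D : ℝ} (hα : 0 ≤ α)
    (hc : c ≤ ⟪v, x - z⟫) (hD : ‖v‖ ^ 2 ≤ D) :
    ‖x - α • v - z‖ ^ 2 ≤ ‖x - z‖ ^ 2 - 2 * α * c + α ^ 2 * D := by
  have hexp : ‖x - α • v - z‖ ^ 2 = ‖x - z‖ ^ 2 - 2 * α * ⟪v, x - z⟫ + α ^ 2 * ‖v‖ ^ 2 := by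
    rw [sub_right_comm, norm_sub_sq_real, real_inner_smul_right, norm_smul, Real.norm_eq_abs,
      mul_pow, sq_abs, real_inner_comm]
    ring
  rw [hexp]
  nlinarith [mul_le_mul_of_nonneg_left hc hα, mul_le_mul_of_nonneg_left hD (sq_nonneg α)]

variable [CompleteSpace E] {g : E → ℝ} {g' : E → E}

theorem ConvexOn.inner_gradient_le_sub (hconv : ConvexOn ℝ Set.univ g) {x : E} {gx : E}
    (hg : HasGradientAt g gx x) (y : E) : ⟪gx, y - x⟫ ≤ g y - g x := by
  have hline : ConvexOn ℝ Set.univ (g ∘ (AffineMap.lineMap x y : ℝ →ᵃ[ℝ] E)) :=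
    hconv.comp_affineMap (AffineMap.lineMap x y)
  have hderiv : HasDerivAt (g ∘ (AffineMap.lineMap x y : ℝ →ᵃ[ℝ] E)) ⟪gx, y - x⟫ 0 := by
    simpa using hg.hasFDerivAt.comp_hasDerivAt_of_eq 0 AffineMap.hasDerivAt_lineMap
      (AffineMap.lineMap_apply_zero x y).symm
  simpa [slope] using
    hline.le_slope_of_hasDerivAt (Set.mem_univ 0) (Set.mem_univ 1) zero_lt_one hderiv

theorem abs_sub_le_of_norm_gradient_le {C : ℝ} (hg : ∀ x, HasGradientAt g (g' x) x)
    (hC : ∀ x, ‖g' x‖ ≤ C) (x y : E) : |g x - g y| ≤ C * ‖x - y‖ := by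
  simpa [Real.norm_eq_abs] using Convex.norm_image_sub_le_of_norm_hasFDerivWithin_le
    (fun z _ => (hg z).hasFDerivAt.hasFDerivWithinAt) (fun z _ => by simpa using hC z)
    convex_univ (Set.mem_univ y) (Set.mem_univ x)

end InnerProductSpace

section AugmentedLagrangian

variable {E ι : Type*} [NormedAddCommGroup E] [InnerProductSpace ℝ E] [Fintype ι]

/-- The penalty `U_ρ(x, λ)`; `augPenaltyGrad` is its gradient in `x`. -/
noncomputable def augPenalty (ρ : ℝ) (g : ι → E → ℝ) (x : E) (lam : ι → ℝ) : ℝ :=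
  ∑ i, (max (ρ * g i x + lam i) 0 ^ 2 - lam i ^ 2) / (2 * ρ)

noncomputable def augPenaltyGrad (ρ : ℝ) (g : ι → E → ℝ) (g' : ι → E → E) (x : E)
    (lam : ι → ℝ) : E :=
  ∑ i, max (ρ * g i x + lam i) 0 • g' i x

theorem augPenaltyGrad_of_complementary {ρ : ℝ} (hρ : 0 ≤ ρ) {g : ι → E → ℝ} (g' : ι → E → E)
    {xs : E} {ls : ι → ℝ} (hls : ∀ i, 0 ≤ ls i) (hgs : ∀ i, g i xs ≤ 0)
    (hcomp : ∀ i, ls i * g i xs = 0) :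
    augPenaltyGrad ρ g g' xs ls = ∑ i, ls i • g' i xs := by
  simp only [augPenaltyGrad, max_mul_add_zero_eq_of_complementary hρ (hls _) (hgs _) (hcomp _)]

variable [CompleteSpace E] {g : ι → E → ℝ} {g' : ι → E → E}

theorem inner_augPenaltyGrad_le {ρ : ℝ} (hρ : 0 < ρ) (hconv : ∀ i, ConvexOn ℝ Set.univ (g i))
    (hg : ∀ i x, HasGradientAt (g i) (g' i x) x) (x y : E) (lam : ι → ℝ) :
    ⟪augPenaltyGrad ρ g g' x lam, y - x⟫ ≤ augPenalty ρ g y lam - augPenalty ρ g x lam := by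
  rw [augPenaltyGrad, augPenalty, augPenalty, ← sum_sub_distrib, sum_inner]
  refine sum_le_sum fun i _ => ?_
  have hlin : ⟪g' i x, y - x⟫ ≤ g i y - g i x := (hconv i).inner_gradient_le_sub (hg i x) y
  have hsq := two_mul_max_zero_mul_sub_le (ρ * g i x + lam i) (ρ * g i y + lam i)
  have hscaled := mul_le_mul_of_nonneg_left hlin (le_max_right (ρ * g i x + lam i) 0)
  rw [real_inner_smul_left, div_sub_div_same, le_div_iff₀ (by positivity)]
  nlinarith

theorem norm_max_smul_sub_smul_le {ρ B L lam ls : ℝ} (hρ : 0 ≤ ρ) (hls : 0 ≤ ls)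
    {h : E → ℝ} {h' : E → E} (hh : ∀ x, HasGradientAt h (h' x) x)
    (hL : ∀ x y, ‖h' x - h' y‖ ≤ L * ‖x - y‖) (hB : ∀ x, ‖h' x‖ ≤ B) {x xs : E}
    (hxs : max (ρ * h xs + ls) 0 = ls) :
    ‖max (ρ * h x + lam) 0 • h' x - ls • h' xs‖
      ≤ ρ * B ^ 2 * ‖x - xs‖ + B * |lam - ls| + ls * L * ‖x - xs‖ := by
  set p := max (ρ * h x + lam) 0
  have hB0 : 0 ≤ B := (norm_nonneg _).trans (hB x)
  have hp : |p - ls| ≤ ρ * (B * ‖x - xs‖) + |lam - ls| := by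
    calc |p - ls| = |p - max (ρ * h xs + ls) 0| := by rw [hxs]
      _ ≤ |(ρ * h x + lam) - (ρ * h xs + ls)| := abs_max_sub_max_le_abs _ _ _
      _ = |ρ * (h x - h xs) + (lam - ls)| := by ring_nf
      _ ≤ |ρ * (h x - h xs)| + |lam - ls| := abs_add_le _ _
      _ = ρ * |h x - h xs| + |lam - ls| := by rw [abs_mul, abs_of_nonneg hρ]
      _ ≤ ρ * (B * ‖x - xs‖) + |lam - ls| := by
          gcongr; exact abs_sub_le_of_norm_gradient_le hh hB x xs
  calc ‖p • h' x - ls • h' xs‖ = ‖(p - ls) • h' x + ls • (h' x - h' xs)‖ := by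
        rw [sub_smul, smul_sub]; abel_nf
    _ ≤ |p - ls| * ‖h' x‖ + ls * ‖h' x - h' xs‖ := by
        grw [norm_add_le, norm_smul, norm_smul, Real.norm_eq_abs, Real.norm_eq_abs,
          abs_of_nonneg hls]
    _ ≤ (ρ * (B * ‖x - xs‖) + |lam - ls|) * B + ls * (L * ‖x - xs‖) := by
        gcongr
        · exact hB x
        · exact hL x xs
    _ = ρ * B ^ 2 * ‖x - xs‖ + B * |lam - ls| + ls * L * ‖x - xs‖ := by ring

theorem norm_augPenaltyGrad_sub_le {ρ : ℝ} (hρ : 0 ≤ ρ) {L B : ι → ℝ}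
    (hg : ∀ i x, HasGradientAt (g i) (g' i x) x)
    (hgL : ∀ i x y, ‖g' i x - g' i y‖ ≤ L i * ‖x - y‖) (hgB : ∀ i x, ‖g' i x‖ ≤ B i)
    {xs : E} {ls : EuclideanSpace ℝ ι} (hls : ∀ i, 0 ≤ ls i) (hgs : ∀ i, g i xs ≤ 0)
    (hcomp : ∀ i, ls i * g i xs = 0) (x : E) (lam : EuclideanSpace ℝ ι) :
    ‖augPenaltyGrad ρ g g' x lam - augPenaltyGrad ρ g g' xs ls‖
      ≤ (ρ * ∑ i, B i ^ 2 + √(∑ i, L i ^ 2) * ‖ls‖) * ‖x - xs‖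
        + √(∑ i, B i ^ 2) * ‖lam - ls‖ := by
  have hterm (i : ι) := norm_max_smul_sub_smul_le (lam := lam i) hρ (hls i) (hg i) (hgL i) (hgB i)
    (x := x) (xs := xs) (max_mul_add_zero_eq_of_complementary hρ (hls i) (hgs i) (hcomp i))
  have hBcs := sum_mul_abs_le_sqrt_mul_norm B (lam - ls)
  have hLcs := sum_mul_abs_le_sqrt_mul_norm L ls
  simp only [PiLp.sub_apply, abs_of_nonneg (hls _)] at hBcs hLcs
  calc ‖augPenaltyGrad ρ g g' x lam - augPenaltyGrad ρ g g' xs ls‖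
      = ‖∑ i, (max (ρ * g i x + lam i) 0 • g' i x - ls i • g' i xs)‖ := by
        rw [augPenaltyGrad_of_complementary hρ g' hls hgs hcomp, augPenaltyGrad,
          ← sum_sub_distrib]
    _ ≤ ∑ i, ‖max (ρ * g i x + lam i) 0 • g' i x - ls i • g' i xs‖ := norm_sum_le _ _
    _ ≤ ∑ i, (ρ * B i ^ 2 * ‖x - xs‖ + B i * |lam i - ls i| + ls i * L i * ‖x - xs‖) :=
        sum_le_sum fun i _ => hterm i
    _ = ρ * (∑ i, B i ^ 2) * ‖x - xs‖ + ∑ i, B i * |lam i - ls i|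
          + (∑ i, L i * ls i) * ‖x - xs‖ := by
        simp only [sum_add_distrib, ← sum_mul, ← mul_sum, mul_comm (ls _)]
    _ ≤ (ρ * ∑ i, B i ^ 2 + √(∑ i, L i ^ 2) * ‖ls‖) * ‖x - xs‖
          + √(∑ i, B i ^ 2) * ‖lam - ls‖ := by
        nlinarith [norm_nonneg (x - xs)]

end AugmentedLagrangian

theorem augPDG_primal_step_bound_general {n m : ℕ} (ρ α : ℝ) (hρ : 0 < ρ) (hα : 0 < α)
    (f' : EuclideanSpace ℝ (Fin n) → EuclideanSpace ℝ (Fin n)) (l μ : ℝ)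
    (hfl : ∀ x y, ‖f' x - f' y‖ ≤ l * ‖x - y‖)
    (g : Fin m → EuclideanSpace ℝ (Fin n) → ℝ)
    (g' : Fin m → EuclideanSpace ℝ (Fin n) → EuclideanSpace ℝ (Fin n))
    (L B : Fin m → ℝ)
    (hgconv : ∀ i, ConvexOn ℝ Set.univ (g i))
    (hg : ∀ i x, HasGradientAt (g i) (g' i x) x)
    (hgL : ∀ i x y, ‖g' i x - g' i y‖ ≤ L i * ‖x - y‖)
    (hgB : ∀ i x, ‖g' i x‖ ≤ B i)
    (xs : EuclideanSpace ℝ (Fin n)) (ls : EuclideanSpace ℝ (Fin m))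
    (hqg : ∀ x : EuclideanSpace ℝ (Fin n), μ * ‖x - xs‖ ^ 2 ≤ ⟪f' x - f' xs, x - xs⟫)
    (hstat : f' xs + ∑ i, ls i • g' i xs = 0)
    (hls : ∀ i, 0 ≤ ls i) (hgs : ∀ i, g i xs ≤ 0) (hcomp : ∀ i, ls i * g i xs = 0)
    (Bg Lg θ₁ a₁ a₂ : ℝ)
    (hBg : Bg = Real.sqrt (∑ i, (B i) ^ 2)) (hLg : Lg = Real.sqrt (∑ i, (L i) ^ 2))
    (hθ₁ : θ₁ = ρ * Bg ^ 2 + Lg * ‖ls‖)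
    (ha₁ : a₁ = 2 * l ^ 2 + 4 * θ₁ ^ 2) (ha₂ : a₂ = 4 * Bg ^ 2)
    (U : EuclideanSpace ℝ (Fin n) → EuclideanSpace ℝ (Fin m) → ℝ)
    (hU : ∀ x μ', U x μ' = ∑ i, ((max (ρ * g i x + μ' i) 0) ^ 2 - (μ' i) ^ 2) / (2 * ρ))
    (xk xk1 : EuclideanSpace ℝ (Fin n)) (lamk : EuclideanSpace ℝ (Fin m))
    (hupd : xk1 = xk - α • f' xk - α • ∑ i, max (ρ * g i xk + lamk i) 0 • g' i xk) :
    ‖xk1 - xs‖ ^ 2 ≤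
      (1 - 2 * μ * α + a₁ * α ^ 2) * ‖xk - xs‖ ^ 2 + a₂ * α ^ 2 * ‖lamk - ls‖ ^ 2 +
        2 * α * (U xs lamk - U xk lamk) + 2 * α * (U xk ls - U xs ls) := by
  obtain rfl : U = fun x (lam : EuclideanSpace ℝ (Fin m)) => augPenalty ρ g x lam := funext₂ hU
  set P := augPenaltyGrad ρ g g' xk lamk
  set Ps := augPenaltyGrad ρ g g' xs ls
  have hstat' : f' xs + Ps = 0 := by
    simpa only [Ps, augPenaltyGrad_of_complementary hρ.le g' hls hgs hcomp] using hstat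
  have hstep : xk1 = xk - α • (f' xk + P) := by rw [hupd, smul_add, sub_sub]; rfl
  have hsplit : f' xk + P = (f' xk - f' xs) + (P - Ps) := by
    rw [← sub_eq_zero, ← hstat']; abel
  have hlow : μ * ‖xk - xs‖ ^ 2 + (augPenalty ρ g xk lamk - augPenalty ρ g xs lamk)
      - (augPenalty ρ g xk ls - augPenalty ρ g xs ls) ≤ ⟪f' xk + P, xk - xs⟫ := by
    have hP : ⟪P, xs - xk⟫ ≤ augPenalty ρ g xs lamk - augPenalty ρ g xk lamk :=
      inner_augPenaltyGrad_le hρ hgconv hg xk xs lamk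
    have hPs : ⟪Ps, xk - xs⟫ ≤ augPenalty ρ g xk ls - augPenalty ρ g xs ls :=
      inner_augPenaltyGrad_le hρ hgconv hg xs xk ls
    rw [← neg_sub, inner_neg_right] at hP
    rw [hsplit, inner_add_left, inner_sub_left P]
    linarith [hqg xk]
  have hBg2 : Bg ^ 2 = ∑ i, B i ^ 2 := by rw [hBg, Real.sq_sqrt (by positivity)]
  have hf'd : ‖f' xk - f' xs‖ ≤ l * ‖xk - xs‖ := hfl xk xs
  have hPd : ‖P - Ps‖ ≤ θ₁ * ‖xk - xs‖ + Bg * ‖lamk - ls‖ := by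
    rw [hθ₁, hBg2, hLg, hBg]
    exact norm_augPenaltyGrad_sub_le hρ.le hg hgL hgB hls hgs hcomp xk lamk
  have hup : ‖f' xk + P‖ ^ 2 ≤ a₁ * ‖xk - xs‖ ^ 2 + a₂ * ‖lamk - ls‖ ^ 2 := by
    have hnorm := hsplit ▸ norm_add_le (f' xk - f' xs) (P - Ps)
    rw [ha₁, ha₂]
    nlinarith [norm_nonneg (f' xk - f' xs), norm_nonneg (P - Ps), norm_nonneg (f' xk + P),
      sq_nonneg (‖f' xk - f' xs‖ - ‖P - Ps‖), sq_nonneg (θ₁ * ‖xk - xs‖ - Bg * ‖lamk - ls‖)]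
  rw [hstep]
  exact (norm_sub_smul_sub_sq_le hα.le hlow hup).trans_eq (by ring)

/-- One-step contraction estimate for the primal update of Aug-PDG:
`‖x_{k+1} − x*‖² ≤ (1 − 2μα + a₁α²)‖x_k − x*‖² + a₂α²‖λ_k − λ*‖²
  + 2α(U(x*,λ_k) − U(x_k,λ_k)) + 2α(U(x_k,λ*) − U(x*,λ*))`,
with `a₁ = 2l² + 4θ₁²`, `a₂ = 4B_g²`, `θ₁ = ρB_g² + L_g‖λ*‖`. -/
theorem augPDG_primal_step_bound {n m : ℕ} (ρ α : ℝ) (hρ : 0 < ρ) (hα : 0 < α)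
    (f : EuclideanSpace ℝ (Fin n) → ℝ)
    (f' : EuclideanSpace ℝ (Fin n) → EuclideanSpace ℝ (Fin n)) (l μ : ℝ) (hμ : 0 < μ)
    (hf : ∀ x, HasGradientAt f (f' x) x)
    (hfl : ∀ x y, ‖f' x - f' y‖ ≤ l * ‖x - y‖)
    (g : Fin m → EuclideanSpace ℝ (Fin n) → ℝ)
    (g' : Fin m → EuclideanSpace ℝ (Fin n) → EuclideanSpace ℝ (Fin n))
    (L B : Fin m → ℝ)
    (hgconv : ∀ i, ConvexOn ℝ Set.univ (g i))
    (hg : ∀ i x, HasGradientAt (g i) (g' i x) x)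
    (hgL : ∀ i x y, ‖g' i x - g' i y‖ ≤ L i * ‖x - y‖)
    (hgB : ∀ i x, ‖g' i x‖ ≤ B i)
    (xs : EuclideanSpace ℝ (Fin n)) (ls : EuclideanSpace ℝ (Fin m))
    (hqg : ∀ x : EuclideanSpace ℝ (Fin n), μ * ‖x - xs‖ ^ 2 ≤ ⟪f' x - f' xs, x - xs⟫)
    (hstat : f' xs + ∑ i, ls i • g' i xs = 0)
    (hls : ∀ i, 0 ≤ ls i) (hgs : ∀ i, g i xs ≤ 0) (hcomp : ∀ i, ls i * g i xs = 0)
    (Bg Lg θ₁ a₁ a₂ : ℝ)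
    (hBg : Bg = Real.sqrt (∑ i, (B i) ^ 2)) (hLg : Lg = Real.sqrt (∑ i, (L i) ^ 2))
    (hθ₁ : θ₁ = ρ * Bg ^ 2 + Lg * ‖ls‖)
    (ha₁ : a₁ = 2 * l ^ 2 + 4 * θ₁ ^ 2) (ha₂ : a₂ = 4 * Bg ^ 2)
    (U : EuclideanSpace ℝ (Fin n) → EuclideanSpace ℝ (Fin m) → ℝ)
    (hU : ∀ x μ', U x μ' = ∑ i, ((max (ρ * g i x + μ' i) 0) ^ 2 - (μ' i) ^ 2) / (2 * ρ))
    (xk xk1 : EuclideanSpace ℝ (Fin n)) (lamk : EuclideanSpace ℝ (Fin m))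
    (hlamk : ∀ i, 0 ≤ lamk i)
    (hupd : xk1 = xk - α • f' xk - α • ∑ i, max (ρ * g i xk + lamk i) 0 • g' i xk) :
    ‖xk1 - xs‖ ^ 2 ≤
      (1 - 2 * μ * α + a₁ * α ^ 2) * ‖xk - xs‖ ^ 2 + a₂ * α ^ 2 * ‖lamk - ls‖ ^ 2 +
        2 * α * (U xs lamk - U xk lamk) + 2 * α * (U xk ls - U xs ls) :=
  augPDG_primal_step_bound_general ρ α hρ hα f' l μ hfl g g' L B hgconv hg hgL hgB xs ls hqg hstat
    hls hgs hcomp Bg Lg θ₁ a₁ a₂ hBg hLg hθ₁ ha₁ ha₂ U hU xk xk1 lamk hupd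
end

section
/- Let ρ > 0, let each g_i : ℝⁿ → ℝ be differentiable with ‖∇g_i(x)‖ ≤ B_{gi} for all x (so that |g_i(x) − g_i(y)| ≤ B_{gi}‖x−y‖), and let (x*, λ*) satisfy λ* ≥ 0, g(x*) ≤ 0 and λ_i* g_i(x*) = 0 for all i (so that [ρ g_i(x*)+λ_i*]_+ = λ_i* for all i). Then for all x ∈ ℝⁿ and λ ∈ ℝ^m, Σ_{i=1}^m ( ([ρ g_i(x)+λ_i]_+ − λ_i)/ρ )² ≤ 2B_g²‖x − x*‖² + (2/ρ²)‖λ − λ*‖², where B_g = sqrt(Σ_{i=1}^m B_{gi}²) and [t]_+ = max(t,0). -/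
/-! Writing `[a + l]₊ − l = max a (−l)`, complementary slackness says exactly that
`max (ρ gᵢ(x*)) (−λᵢ*) = 0`. Since `max` is 1-Lipschitz for the max-norm of its two arguments,
`ρ²` times the `i`-th summand is at most `ρ² |gᵢ(x) − gᵢ(x*)|² + |λᵢ − λᵢ*|²`, and the mean value
theorem bounds `|gᵢ(x) − gᵢ(x*)|` by `B_{gi} ‖x − x*‖`. -/

theorem abs_sub_le_of_hasGradientAt_of_norm_le {F : Type*} [NormedAddCommGroup F]
    [InnerProductSpace ℝ F] [CompleteSpace F] {f : F → ℝ} {f' : F → F} {C : ℝ}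
    (hf : ∀ x, HasGradientAt f (f' x) x) (bound : ∀ x, ‖f' x‖ ≤ C) (x y : F) :
    |f x - f y| ≤ C * ‖x - y‖ := by
  simpa [Real.norm_eq_abs] using convex_univ.norm_image_sub_le_of_norm_hasFDerivWithin_le
    (fun z _ => (hf z).hasFDerivAt.hasFDerivWithinAt) (fun z _ => by simpa using bound z)
    (Set.mem_univ y) (Set.mem_univ x)

theorem sq_max_sub_max_le (a b c d : ℝ) :
    (max a b - max c d) ^ 2 ≤ (a - c) ^ 2 + (b - d) ^ 2 := by
  calc (max a b - max c d) ^ 2 = |max a b - max c d| ^ 2 := (sq_abs _).symm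
    _ ≤ max |a - c| |b - d| ^ 2 :=
        pow_le_pow_left₀ (abs_nonneg _) (abs_max_sub_max_le_max a b c d) 2
    _ ≤ (a - c) ^ 2 + (b - d) ^ 2 := by
        rcases max_choice |a - c| |b - d| with h | h <;>
          rw [h, sq_abs] <;> linarith [sq_nonneg (a - c), sq_nonneg (b - d)]

theorem sq_max_add_sub_le {a l a₀ l₀ : ℝ} (ha₀ : a₀ ≤ 0) (hl₀ : 0 ≤ l₀) (hc : l₀ * a₀ = 0) :
    (max (a + l) 0 - l) ^ 2 ≤ (a - a₀) ^ 2 + (l - l₀) ^ 2 := by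
  have hshift : max (a + l) 0 - l = max a (-l) := by
    rw [← max_sub_sub_right, add_sub_cancel_right, zero_sub]
  have hkkt : max a₀ (-l₀) = 0 := by
    rcases mul_eq_zero.mp hc with h | h
    · simp [h, ha₀]
    · simp [h, hl₀]
  calc (max (a + l) 0 - l) ^ 2 = (max a (-l) - max a₀ (-l₀)) ^ 2 := by
        rw [hshift, hkkt, sub_zero]
    _ ≤ (a - a₀) ^ 2 + (-l - -l₀) ^ 2 := sq_max_sub_max_le _ _ _ _
    _ = (a - a₀) ^ 2 + (l - l₀) ^ 2 := by ring

theorem sq_max_mul_add_sub_div_le {ρ u l u₀ l₀ : ℝ} (hρ : 0 < ρ) (hu₀ : u₀ ≤ 0) (hl₀ : 0 ≤ l₀)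
    (hc : l₀ * u₀ = 0) :
    ((max (ρ * u + l) 0 - l) / ρ) ^ 2 ≤ (u - u₀) ^ 2 + (l - l₀) ^ 2 / ρ ^ 2 := by
  have h := sq_max_add_sub_le (a := ρ * u) (l := l)
    (mul_nonpos_of_nonneg_of_nonpos hρ.le hu₀) hl₀ (by rw [mul_left_comm, hc, mul_zero])
  rw [div_pow, div_le_iff₀ (by positivity), add_mul, div_mul_cancel₀ _ (by positivity)]
  linarith [show (ρ * u - ρ * u₀) ^ 2 = (u - u₀) ^ 2 * ρ ^ 2 by ring]

/-- Bound on the squared norm of the `λ`-gradient of the augmented penalty at a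
KKT-type point: `Σᵢ (([ρgᵢ(x)+λᵢ]₊ − λᵢ)/ρ)² ≤ 2B_g²‖x − x*‖² + (2/ρ²)‖λ − λ*‖²`. -/
theorem augmented_penalty_gradient_lam_sq_bound {n m : ℕ} (ρ : ℝ) (hρ : 0 < ρ)
    (g : Fin m → EuclideanSpace ℝ (Fin n) → ℝ)
    (g' : Fin m → EuclideanSpace ℝ (Fin n) → EuclideanSpace ℝ (Fin n))
    (B : Fin m → ℝ)
    (hg : ∀ i x, HasGradientAt (g i) (g' i x) x)
    (hgB : ∀ i x, ‖g' i x‖ ≤ B i)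
    (xs : EuclideanSpace ℝ (Fin n)) (ls : EuclideanSpace ℝ (Fin m))
    (hls : ∀ i, 0 ≤ ls i) (hgs : ∀ i, g i xs ≤ 0) (hcomp : ∀ i, ls i * g i xs = 0)
    (Bg : ℝ) (hBg : Bg = Real.sqrt (∑ i, (B i) ^ 2)) :
    ∀ (x : EuclideanSpace ℝ (Fin n)) (lam : EuclideanSpace ℝ (Fin m)),
      ∑ i, ((max (ρ * g i x + lam i) 0 - lam i) / ρ) ^ 2 ≤
        2 * Bg ^ 2 * ‖x - xs‖ ^ 2 + (2 / ρ ^ 2) * ‖lam - ls‖ ^ 2 := by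
  intro x lam
  have hlip (i : Fin m) : (g i x - g i xs) ^ 2 ≤ B i ^ 2 * ‖x - xs‖ ^ 2 := by
    rw [← sq_abs, ← mul_pow]
    exact pow_le_pow_left₀ (abs_nonneg _)
      (abs_sub_le_of_hasGradientAt_of_norm_le (hg i) (hgB i) x xs) 2
  have hBg2 : Bg ^ 2 = ∑ i, B i ^ 2 := by
    rw [hBg, Real.sq_sqrt (Finset.sum_nonneg fun i _ => sq_nonneg _)]
  have hlam : ‖lam - ls‖ ^ 2 = ∑ i, (lam i - ls i) ^ 2 := by
    simp [EuclideanSpace.norm_sq_eq]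
  calc ∑ i, ((max (ρ * g i x + lam i) 0 - lam i) / ρ) ^ 2
      ≤ ∑ i, (B i ^ 2 * ‖x - xs‖ ^ 2 + (lam i - ls i) ^ 2 / ρ ^ 2) :=
        Finset.sum_le_sum fun i _ =>
          (sq_max_mul_add_sub_div_le hρ (hgs i) (hls i) (hcomp i)).trans (by linarith [hlip i])
    _ = Bg ^ 2 * ‖x - xs‖ ^ 2 + ‖lam - ls‖ ^ 2 / ρ ^ 2 := by
        rw [Finset.sum_add_distrib, ← Finset.sum_mul, ← Finset.sum_div, hBg2, hlam]
    _ ≤ 2 * Bg ^ 2 * ‖x - xs‖ ^ 2 + (2 / ρ ^ 2) * ‖lam - ls‖ ^ 2 := by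
        have hx : 0 ≤ Bg ^ 2 * ‖x - xs‖ ^ 2 := by positivity
        have hl : 0 ≤ ‖lam - ls‖ ^ 2 / ρ ^ 2 := by positivity
        linarith [show 2 / ρ ^ 2 * ‖lam - ls‖ ^ 2 = 2 * (‖lam - ls‖ ^ 2 / ρ ^ 2) by ring]
end
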